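/- arXiv:2204.01239 — 7 statements merged into one kernel-verified Lean document; each statement's English description precedes it below -/
import Mathlib

section
/- Let {M_ω}_{ω ∈ Λ} be a family of left R-modules indexed by a nonempty set Λ. Then the direct sum ⨁_{ω ∈ Λ} M_ω has a proper essential submodule if and only if some M_ω has a proper essential submodule. -/
/-- `E` is a proper essential submodule of `M`: a proper nontrivial submodule that
intersects every nonzero submodule nontrivially. -/
def IsProperEssential {R M : Type*} [Ring R] [AddCommGroup M] [Module R M]
    (E : Submodule R M) : Prop :=
  E ≠ ⊥ ∧ E ≠ ⊤ ∧ ∀ N : Submodule R M, N ≠ ⊥ → E ⊓ N ≠ ⊥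

open DirectSum

/-!
The preimage of an essential submodule under any linear map is essential: a nonzero `x` is either
killed by `f`, or some `r • f x` is a nonzero element of `E`. Pulling a proper essential submodule
of `M i` back along the surjective projection `⨁ M → M i` therefore gives one of the sum.
Conversely, if no factor has a proper essential submodule, the preimage of an essential `E` along
each inclusion `M i → ⨁ M` is all of `M i` (it cannot be `⊥` unless `M i = 0`), so `E = ⊤`.
-/

namespace Submodule

variable {R M N : Type*} [Ring R] [AddCommGroup M] [Module R M] [AddCommGroup N] [Module R N]

def IsEssential (E : Submodule R M) : Prop :=
  ∀ N : Submodule R M, N ≠ ⊥ → E ⊓ N ≠ ⊥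

theorem isProperEssential_iff {E : Submodule R M} :
    IsProperEssential E ↔ E ≠ ⊥ ∧ E ≠ ⊤ ∧ E.IsEssential :=
  Iff.rfl

theorem isEssential_iff_exists_smul_mem {E : Submodule R M} :
    E.IsEssential ↔ ∀ x : M, x ≠ 0 → ∃ r : R, r • x ∈ E ∧ r • x ≠ 0 := by
  constructor
  · intro hE x hx
    have hspan : span R {x} ≠ ⊥ := by simpa [span_singleton_eq_bot] using hx
    obtain ⟨y, ⟨hyE, hyx⟩, hy0⟩ := (Submodule.ne_bot_iff _).1 (hE _ hspan)
    obtain ⟨r, rfl⟩ := mem_span_singleton.1 hyx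
    exact ⟨r, hyE, hy0⟩
  · intro hE N hN
    obtain ⟨x, hxN, hx0⟩ := (Submodule.ne_bot_iff N).1 hN
    obtain ⟨r, hrE, hr0⟩ := hE x hx0
    exact (Submodule.ne_bot_iff _).2 ⟨r • x, ⟨hrE, N.smul_mem r hxN⟩, hr0⟩

theorem IsEssential.eq_top {E : Submodule R M} (hE : E.IsEssential)
    (h : ∀ E' : Submodule R M, ¬IsProperEssential E') : E = ⊤ := by
  by_contra htop
  have hbot : E ≠ ⊥ := by
    rintro rfl
    exact hE ⊤ (fun h' => htop h'.symm) (bot_inf_eq ⊤)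
  exact h E ⟨hbot, htop, hE⟩

theorem IsEssential.comap {E : Submodule R N} (hE : E.IsEssential) (f : M →ₗ[R] N) :
    (E.comap f).IsEssential := by
  rw [isEssential_iff_exists_smul_mem] at hE ⊢
  intro x hx
  by_cases hfx : f x = 0
  · exact ⟨1, by simp [hfx], by simpa using hx⟩
  · obtain ⟨r, hr, hr0⟩ := hE (f x) hfx
    exact ⟨r, by simpa using hr, fun h => hr0 (by rw [← map_smul, h, map_zero])⟩

end Submodule

theorem IsProperEssential.comap_of_surjective {R M N : Type*} [Ring R] [AddCommGroup M]
    [Module R M] [AddCommGroup N] [Module R N] {E : Submodule R N} (hE : IsProperEssential E)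
    {f : M →ₗ[R] N} (hf : Function.Surjective f) : IsProperEssential (E.comap f) := by
  obtain ⟨hbot, htop, hess⟩ := Submodule.isProperEssential_iff.1 hE
  refine ⟨fun h => hbot ?_, fun h => htop ?_, hess.comap f⟩
  · rw [← Submodule.map_comap_eq_of_surjective hf E, h, Submodule.map_bot]
  · exact Submodule.comap_injective_of_surjective hf (by rw [h, Submodule.comap_top])

namespace DirectSum

variable {R ι : Type*} [Semiring R] [DecidableEq ι] {M : ι → Type*}
  [∀ i, AddCommMonoid (M i)] [∀ i, Module R (M i)]

theorem submodule_eq_top_of_forall_lof_mem {E : Submodule R (⨁ i, M i)}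
    (h : ∀ i (m : M i), lof R ι M i m ∈ E) : E = ⊤ := by
  refine Submodule.eq_top_iff'.2 fun x => ?_
  induction x using DirectSum.induction_on with
  | zero => exact E.zero_mem
  | of i m => exact h i m
  | add x y hx hy => exact E.add_mem hx hy

theorem component_surjective (i : ι) : Function.Surjective (component R ι M i) :=
  fun m => ⟨lof R ι M i m, component.lof_self R i m⟩

end DirectSum

theorem directSum_properEssential_iff_general {R : Type*} [Ring R] {ι : Type*}
    (M : ι → Type*) [∀ i, AddCommGroup (M i)] [∀ i, Module R (M i)] :
    (∃ E : Submodule R (⨁ i, M i), IsProperEssential E) ↔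
      ∃ i, ∃ E : Submodule R (M i), IsProperEssential E := by
  classical
  constructor
  · rintro ⟨E, hE⟩
    obtain ⟨-, htop, hess⟩ := Submodule.isProperEssential_iff.1 hE
    by_contra! h
    exact htop <| submodule_eq_top_of_forall_lof_mem fun i =>
      Submodule.eq_top_iff'.1 ((hess.comap (lof R ι M i)).eq_top (h i))
  · rintro ⟨i, E, hE⟩
    exact ⟨E.comap (component R ι M i), hE.comap_of_surjective (component_surjective i)⟩

/-- A direct sum of modules has a proper essential submodule iff one of the factors does. -/
theorem directSum_properEssential_iff {R : Type*} [Ring R] {ι : Type*} [Nonempty ι]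
    [DecidableEq ι] (M : ι → Type*) [∀ i, AddCommGroup (M i)] [∀ i, Module R (M i)] :
    (∃ E : Submodule R (⨁ i, M i), IsProperEssential E) ↔
      ∃ i, ∃ E : Submodule R (M i), IsProperEssential E :=
  directSum_properEssential_iff_general M
end

section
/- Let R be a principal ideal domain and let ⟨m⟩ be a non-simple cyclic left R-module generated by m, with nonzero annihilator Ann_R(m) = ⟨a⟩. Then ⟨m⟩ has a proper essential submodule if and only if a is not square-free. -/
open Submodule

theorem Submodule.inf_ne_bot_of_smul_mem {R M : Type*} [Ring R] [AddCommGroup M] [Module R M]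
    {E N : Submodule R M} (p : R) (hsmul : ∀ y : M, p • y ∈ E)
    (htors : ∀ y : M, p • y = 0 → y ∈ E) (hN : N ≠ ⊥) : E ⊓ N ≠ ⊥ := by
  obtain ⟨y, hyN, hy0⟩ := (Submodule.ne_bot_iff N).mp hN
  rw [Submodule.ne_bot_iff]
  by_cases hpy : p • y = 0
  · exact ⟨y, ⟨htors y hpy, hyN⟩, hy0⟩
  · exact ⟨p • y, ⟨hsmul y, N.smul_mem p hyN⟩, hpy⟩

section CommRing

variable {R M : Type*} [CommRing R] [AddCommGroup M] [Module R M]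

theorem eq_zero_of_isCoprime_of_smul_eq_zero {d e : R} (hde : IsCoprime d e) {y : M}
    (hd : d • y = 0) (he : e • y = 0) : y = 0 := by
  obtain ⟨u, v, huv⟩ := hde
  calc y = (u * d + v * e) • y := by rw [huv, one_smul]
    _ = 0 := by rw [add_smul, mul_smul, mul_smul, hd, he, smul_zero, smul_zero, add_zero]

theorem smul_eq_zero_of_mem_span_singleton {e : R} {y z : M} (hz : e • z = 0)
    (hy : y ∈ R ∙ z) : e • y = 0 := by
  obtain ⟨s, rfl⟩ := mem_span_singleton.mp hy
  rw [smul_comm, hz, smul_zero]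

variable {x : M} {a : R}

theorem exists_dvd_eq_span_smul [IsPrincipalIdealRing R] (hx : R ∙ x = ⊤)
    (hann : ∀ r : R, r • x = 0 ↔ a ∣ r) (E : Submodule R M) :
    ∃ d : R, d ∣ a ∧ E = R ∙ (d • x) := by
  obtain ⟨d, hd⟩ :=
    IsPrincipalIdealRing.principal (E.comap (LinearMap.toSpanSingleton R M x))
  have ha : a ∈ E.comap (LinearMap.toSpanSingleton R M x) := by simp [(hann a).mpr dvd_rfl]
  refine ⟨d, Ideal.mem_span_singleton.mp (hd.le ha), ?_⟩
  have hsurj : Function.Surjective (LinearMap.toSpanSingleton R M x) := by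
    rw [← LinearMap.range_eq_top, LinearMap.range_toSpanSingleton, hx]
  rw [← map_comap_eq_of_surjective hsurj E, hd, Submodule.map_span, Set.image_singleton,
    LinearMap.toSpanSingleton_apply]

theorem span_smul_eq_top_iff (hx : R ∙ x = ⊤) (hann : ∀ r : R, r • x = 0 ↔ a ∣ r) {d : R}
    (hd : d ∣ a) : R ∙ (d • x) = ⊤ ↔ IsUnit d := by
  refine ⟨fun htop => ?_, fun hu => span_singleton_smul_eq hu x ▸ hx⟩
  obtain ⟨s, hs⟩ := mem_span_singleton.mp (htop ▸ mem_top : x ∈ R ∙ (d • x))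
  have hsd : a ∣ s * d - 1 := (hann _).mp (by rw [sub_smul, mul_smul, hs, one_smul, sub_self])
  exact isUnit_of_dvd_one ((dvd_sub_right (dvd_mul_left d s)).mp (hd.trans hsd))

theorem smul_ne_zero_of_mul_dvd [IsDomain R] (hann : ∀ r : R, r • x = 0 ↔ a ∣ r) {b c : R}
    (hbc : b * c ∣ a) (hc : c ≠ 0) (hb : ¬IsUnit b) : c • x ≠ 0 := by
  rw [Ne, hann]
  intro hac
  have hbc1 : b * c ∣ 1 * c := by rw [one_mul]; exact hbc.trans hac
  exact hb (isUnit_of_dvd_one ((mul_dvd_mul_iff_right hc).mp hbc1))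

theorem not_isProperEssential_of_squarefree [IsDomain R] [IsPrincipalIdealRing R]
    (hx : R ∙ x = ⊤) (hann : ∀ r : R, r • x = 0 ↔ a ∣ r) (ha : a ≠ 0) (hsq : Squarefree a)
    (E : Submodule R M) : ¬IsProperEssential E := by
  rintro ⟨-, hEtop, hess⟩
  obtain ⟨d, ⟨d', rfl⟩, rfl⟩ := exists_dvd_eq_span_smul hx hann E
  have hd : ¬IsUnit d := fun hu => hEtop (span_singleton_smul_eq hu x ▸ hx)
  have hcop : IsCoprime d d' := isRelPrime_iff_isCoprime.mp (IsRelPrime.of_squarefree_mul hsq)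
  have hN : R ∙ (d' • x) ≠ ⊥ := by
    rw [Ne, span_singleton_eq_bot]
    exact smul_ne_zero_of_mul_dvd hann dvd_rfl (right_ne_zero_of_mul ha) hd
  refine hess _ hN (eq_bot_iff.mpr fun y ⟨hyE, hyN⟩ => ?_)
  rw [mem_bot]
  refine eq_zero_of_isCoprime_of_smul_eq_zero hcop
    (smul_eq_zero_of_mem_span_singleton ?_ hyN) (smul_eq_zero_of_mem_span_singleton ?_ hyE)
  · rw [smul_smul, hann]
  · rw [smul_smul, hann, mul_comm]

theorem isProperEssential_span_smul [IsDomain R] (hx : R ∙ x = ⊤)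
    (hann : ∀ r : R, r • x = 0 ↔ a ∣ r) (ha : a ≠ 0) {p : R} (hp : p * p ∣ a)
    (hpu : ¬IsUnit p) :
    IsProperEssential (R ∙ (p • x)) := by
  have hp0 : p ≠ 0 := by
    rintro rfl
    exact ha (zero_dvd_iff.mp (by simpa using hp))
  have hgen : ∀ y : M, ∃ r : R, r • x = y := (span_singleton_eq_top_iff R x).mp hx
  refine ⟨?_, ?_, fun N hN => inf_ne_bot_of_smul_mem p ?_ ?_ hN⟩
  · rw [Ne, span_singleton_eq_bot]
    exact smul_ne_zero_of_mul_dvd hann hp hp0 hpu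
  · rwa [Ne, span_smul_eq_top_iff hx hann ((dvd_mul_right p p).trans hp)]
  · intro y
    obtain ⟨r, rfl⟩ := hgen y
    rw [smul_comm]
    exact smul_mem _ r (mem_span_singleton_self _)
  · intro y hy
    obtain ⟨r, rfl⟩ := hgen y
    rw [smul_smul, hann] at hy
    obtain ⟨t, rfl⟩ := (mul_dvd_mul_iff_left hp0).mp (hp.trans hy)
    rw [mul_comm, mul_smul]
    exact smul_mem _ t (mem_span_singleton_self _)

end CommRing

theorem cyclic_pid_properEssential_iff_general {R M : Type*} [CommRing R] [IsDomain R]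
    [IsPrincipalIdealRing R] [AddCommGroup M] [Module R M] (m : M) (a : R) (ha : a ≠ 0)
    (hann : LinearMap.ker (LinearMap.toSpanSingleton R M m) = Ideal.span {a}) :
    (∃ E : Submodule R ↥(R ∙ m), IsProperEssential E) ↔ ¬ Squarefree a := by
  let x : ↥(R ∙ m) := ⟨m, mem_span_singleton_self m⟩
  have hx : R ∙ x = ⊤ := by
    refine (span_singleton_eq_top_iff R x).mpr fun ⟨y, hy⟩ => ?_
    obtain ⟨r, rfl⟩ := mem_span_singleton.mp hy
    exact ⟨r, rfl⟩
  have hannx : ∀ r : R, r • x = 0 ↔ a ∣ r := fun r => by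
    rw [← Ideal.mem_span_singleton, ← hann, LinearMap.mem_ker, LinearMap.toSpanSingleton_apply,
      ← coe_eq_zero]
    rfl
  constructor
  · rintro ⟨E, hE⟩ hsq
    exact not_isProperEssential_of_squarefree hx hannx ha hsq E hE
  · intro hsq
    obtain ⟨p, hp, hpu⟩ : ∃ p : R, p * p ∣ a ∧ ¬IsUnit p := by simpa [Squarefree] using hsq
    exact ⟨_, isProperEssential_span_smul hx hannx ha hp hpu⟩

/-- A non-simple cyclic module `⟨m⟩` over a PID with nonzero annihilator `⟨a⟩`
has a proper essential submodule iff `a` is not square-free. -/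
theorem cyclic_pid_properEssential_iff {R M : Type*} [CommRing R] [IsDomain R]
    [IsPrincipalIdealRing R] [AddCommGroup M] [Module R M] (m : M) (a : R) (ha : a ≠ 0)
    (hann : LinearMap.ker (LinearMap.toSpanSingleton R M m) = Ideal.span {a})
    (hns : ¬ IsSimpleModule R ↥(R ∙ m)) :
    (∃ E : Submodule R ↥(R ∙ m), IsProperEssential E) ↔ ¬ Squarefree a :=
  cyclic_pid_properEssential_iff_general m a ha hann
end

section
/- Let R be a principal ideal domain that is not a field and let M be a finitely generated R-module with invariant factor decomposition M ≅ R^n ⊕ R/⟨a₁⟩ ⊕ ⋯ ⊕ R/⟨a_m⟩, where the a_i are nonzero nonunits with a₁ ∣ a₂ ∣ ⋯ ∣ a_m. Then M has a proper essential submodule if and only if n ≥ 1 or some a_i is not square-free. -/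
/-!
If `n = 0` and every `aᵢ` is squarefree, each `R ⧸ (aᵢ)` is a reduced Artinian ring, hence
semisimple, so `M` is a semisimple module. An essential submodule meets every complement of
itself, so in a semisimple module it is `⊤`.

Conversely, if `p * p ∣ b` for a nonzero nonunit `p`, then `p • (R ⧸ (b))` is a proper essential
submodule of `R ⧸ (b)`: for `p ∤ x` the multiple `p • x̄` is nonzero and lies in it. Such a `p`
exists whenever `b` is not squarefree, for `b = 0` because `R` is not a field. Preimages of proper
essential submodules under surjections are proper essential, and `M` surjects onto `R ⧸ (0)` when
`n ≥ 1` and onto each `R ⧸ (aᵢ)`.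
-/

open Function

section

variable {R M N : Type*} [Ring R] [AddCommGroup M] [Module R M] [AddCommGroup N] [Module R N]

theorem not_isProperEssential_of_isSemisimpleModule [IsSemisimpleModule R M]
    (E : Submodule R M) : ¬IsProperEssential E := by
  rintro ⟨-, hE_ne_top, hE_ess⟩
  obtain ⟨C, hC⟩ := exists_isCompl E
  have hC_bot : C = ⊥ := by
    by_contra hC_ne_bot
    exact hE_ess C hC_ne_bot hC.inf_eq_bot
  exact hE_ne_top (by simpa [hC_bot] using hC.sup_eq_top)

theorem IsProperEssential.comap {f : M →ₗ[R] N} (hf : Surjective f) {E : Submodule R N}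
    (hE : IsProperEssential E) : IsProperEssential (E.comap f) := by
  obtain ⟨hE_ne_bot, hE_ne_top, hE_ess⟩ := hE
  have hmap := Submodule.map_comap_eq_of_surjective hf E
  refine ⟨fun h => hE_ne_bot ?_, fun h => hE_ne_top ?_, fun K hK => ?_⟩
  · rw [← hmap, h, Submodule.map_bot]
  · rw [← hmap, h, Submodule.map_top, LinearMap.range_eq_top.2 hf]
  by_cases hK_ker : K ≤ LinearMap.ker f
  · rwa [inf_eq_right.2 (hK_ker.trans (LinearMap.ker_le_comap f))]
  obtain ⟨y, ⟨hyE, x, hxK, rfl⟩, hy0⟩ :=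
    (Submodule.ne_bot_iff _).1 (hE_ess _ (mt LinearMap.le_ker_iff_map.2 hK_ker))
  exact (Submodule.ne_bot_iff _).2 ⟨x, ⟨hyE, hxK⟩, fun hx => hy0 (by simp [hx])⟩

end

section

variable {R : Type*} [CommRing R] [IsDomain R]

theorem isProperEssential_map_mkQ_span_of_mul_self_dvd {p b : R} (hp0 : p ≠ 0)
    (hpu : ¬IsUnit p) (hpb : p * p ∣ b) :
    IsProperEssential (Submodule.map (Ideal.span {b}).mkQ (Ideal.span {p})) := by
  set S := Submodule.map (Ideal.span {b}).mkQ (Ideal.span {p})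
  have hmem (x : R) : (Ideal.span {b}).mkQ x ∈ S ↔ p ∣ x := by
    rw [← Submodule.mem_comap, Submodule.comap_map_mkQ,
      sup_eq_right.2 (Ideal.span_singleton_le_span_singleton.2 (dvd_of_mul_left_dvd hpb)),
      Ideal.mem_span_singleton]
  have hmkQ_ne_zero {x : R} (hx : ¬p ∣ x) : (Ideal.span {b}).mkQ (p * x) ≠ 0 := by
    rw [Submodule.mkQ_apply, Ne, Submodule.Quotient.mk_eq_zero, Ideal.mem_span_singleton]
    exact fun hb => hx ((mul_dvd_mul_iff_left hp0).1 (hpb.trans hb))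
  have hp_not_dvd_one : ¬p ∣ 1 := fun h => hpu (isUnit_of_dvd_one h)
  refine ⟨fun h => ?_, fun h => ?_, fun K hK => ?_⟩
  · have hp : (Ideal.span {b}).mkQ (p * 1) ∈ S := (hmem _).2 (dvd_mul_right p 1)
    exact hmkQ_ne_zero hp_not_dvd_one (by simpa [h] using hp)
  · exact hp_not_dvd_one ((hmem 1).1 (h ▸ Submodule.mem_top))
  obtain ⟨z, hzK, hz0⟩ := (Submodule.ne_bot_iff _).1 hK
  obtain ⟨x, rfl⟩ := (Ideal.span {b}).mkQ_surjective z
  rw [Submodule.ne_bot_iff]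
  by_cases hpx : p ∣ x
  · exact ⟨_, ⟨(hmem x).2 hpx, hzK⟩, hz0⟩
  · refine ⟨(Ideal.span {b}).mkQ (p * x), ⟨(hmem _).2 (dvd_mul_right p x), ?_⟩, hmkQ_ne_zero hpx⟩
    rw [← smul_eq_mul, map_smul]
    exact K.smul_mem p hzK

theorem exists_isProperEssential_quotient_span_of_not_squarefree (hR : ¬IsField R) {b : R}
    (hb : ¬Squarefree b) : ∃ E : Submodule R (R ⧸ Ideal.span {b}), IsProperEssential E := by
  obtain ⟨p, hp0, hpu, hpb⟩ : ∃ p : R, p ≠ 0 ∧ ¬IsUnit p ∧ p * p ∣ b := by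
    by_cases hb0 : b = 0
    · obtain ⟨p, hp0, hpu⟩ := Ring.exists_not_isUnit_of_not_isField hR
      exact ⟨p, hp0, hpu, hb0 ▸ dvd_zero _⟩
    obtain ⟨p, hpb, hpu⟩ : ∃ p, p * p ∣ b ∧ ¬IsUnit p := by simpa [Squarefree] using hb
    exact ⟨p, fun hp => hb0 (by simpa [hp] using hpb), hpu, hpb⟩
  exact ⟨_, isProperEssential_map_mkQ_span_of_mul_self_dvd hp0 hpu hpb⟩

theorem isSemisimpleModule_quotient_span_of_squarefree [IsPrincipalIdealRing R] {a : R}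
    (ha : Squarefree a) : IsSemisimpleModule R (R ⧸ Ideal.span {a}) := by
  have : IsArtinianRing (R ⧸ Ideal.span {a}) :=
    isArtinian_of_tower R ((isFiniteLength_iff_isNoetherian_isArtinian.1
      (isFiniteLength_quotient_span_singleton R (mem_nonZeroDivisors_of_ne_zero ha.ne_zero))).2)
  have : IsReduced (R ⧸ Ideal.span {a}) :=
    (Ideal.isRadical_iff_quotient_reduced _).1 (isRadical_iff_span_singleton.1 ha.isRadical)
  have := IsArtinianRing.isSemisimpleRing_of_isReduced (R ⧸ Ideal.span {a})
  let l : R ⧸ Ideal.span {a} →ₛₗ[Ideal.Quotient.mk (Ideal.span {a})] R ⧸ Ideal.span {a} :=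
    { toFun := id, map_add' := fun _ _ => rfl, map_smul' := fun r x => Algebra.smul_def r x }
  exact (l.isSemisimpleModule_iff_of_bijective bijective_id).2 inferInstance

end

theorem fg_pid_properEssential_iff_general {R : Type*} [CommRing R] [IsDomain R]
    [IsPrincipalIdealRing R] (hR : ¬ IsField R) {M : Type*} [AddCommGroup M] [Module R M]
    (n m : ℕ) (a : Fin m → R)
    (e : M ≃ₗ[R] (Fin n → R) × ((i : Fin m) → R ⧸ Ideal.span {a i})) :
    (∃ E : Submodule R M, IsProperEssential E) ↔
      1 ≤ n ∨ ∃ i, ¬ Squarefree (a i) := by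
  constructor
  · contrapose!
    rintro ⟨hn, hsq⟩ E
    obtain rfl : n = 0 := by omega
    have := fun i => isSemisimpleModule_quotient_span_of_squarefree (hsq i)
    have : IsSemisimpleModule R M := .congr (e.trans LinearEquiv.uniqueProd)
    exact not_isProperEssential_of_isSemisimpleModule E
  · intro h
    obtain ⟨b, hb, f, hf⟩ : ∃ b : R, ¬Squarefree b ∧
        ∃ f : M →ₗ[R] R ⧸ Ideal.span {b}, Surjective f := by
      rcases h with hn | ⟨i, hi⟩
      · exact ⟨0, not_squarefree_zero, (Ideal.Quotient.mkₐ R _).toLinearMap ∘ₗ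
          LinearMap.proj ⟨0, hn⟩ ∘ₗ LinearMap.fst R _ _ ∘ₗ e.toLinearMap,
          (Ideal.Quotient.mkₐ_surjective R _).comp <| (LinearMap.proj_surjective (R := R) _).comp <|
            (LinearMap.fst_surjective (R := R)).comp e.surjective⟩
      · exact ⟨a i, hi, LinearMap.proj i ∘ₗ LinearMap.snd R _ _ ∘ₗ e.toLinearMap,
          (LinearMap.proj_surjective (R := R) _).comp <|
            (LinearMap.snd_surjective (R := R)).comp e.surjective⟩
    obtain ⟨E, hE⟩ := exists_isProperEssential_quotient_span_of_not_squarefree hR hb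
    exact ⟨_, hE.comap hf⟩

/-- A finitely generated module over a PID (not a field) with invariant factor decomposition
`M ≅ Rⁿ ⊕ R/⟨a₁⟩ ⊕ ⋯ ⊕ R/⟨a_m⟩` has a proper essential submodule iff `n ≥ 1` or some
invariant factor is not square-free. -/
theorem fg_pid_properEssential_iff {R : Type*} [CommRing R] [IsDomain R]
    [IsPrincipalIdealRing R] (hR : ¬ IsField R) {M : Type*} [AddCommGroup M] [Module R M]
    [Module.Finite R M] (n m : ℕ) (a : Fin m → R)
    (ha0 : ∀ i, a i ≠ 0) (hau : ∀ i, ¬ IsUnit (a i))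
    (hchain : ∀ i j : Fin m, i ≤ j → a i ∣ a j)
    (e : M ≃ₗ[R] (Fin n → R) × ((i : Fin m) → R ⧸ Ideal.span {a i})) :
    (∃ E : Submodule R M, IsProperEssential E) ↔
      1 ≤ n ∨ ∃ i, ¬ Squarefree (a i) :=
  fg_pid_properEssential_iff_general hR n m a e
end

section
/- Let R be an integral domain that is not a field and let M be a torsion-free left R-module that contains a submodule isomorphic, as an R-module, to the field of fractions Frac(R) of R. Then M has a proper essential submodule. -/
/-- A torsion-free module over an integral domain `R` (not a field) containing a copy of the
field of fractions of `R` has a proper essential submodule. -/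
theorem contains_fractionField_properEssential {R : Type*} [CommRing R] [IsDomain R]
    (hR : ¬ IsField R) {M : Type*} [AddCommGroup M] [Module R M] [NoZeroSMulDivisors R M]
    (N : Submodule R M) (hN : Nonempty (↥N ≃ₗ[R] FractionRing R)) :
    ∃ E : Submodule R M, IsProperEssential E := by
  obtain ⟨f⟩ := hN
  set u : M := ((f.symm 1 : ↥N) : M) with hu
  have hu0 : u ≠ 0 := by
    intro h
    have h1 : f.symm 1 = (0 : N) := Subtype.ext h
    have : (1 : FractionRing R) = 0 := by
      have := congrArg f h1
      simpa using this
    exact one_ne_zero this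
  set K : Submodule R M := Submodule.span R {u} with hK
  have huN : u ∈ N := (f.symm 1).2
  have hKN : K ≤ N := Submodule.span_le.mpr (by simpa using huN)
  -- key: every element of N has a nonzero multiple in K
  have key : ∀ x : N, ∃ b : R, b ≠ 0 ∧ b • (x : M) ∈ K := by
    intro x
    obtain ⟨b, a, ha⟩ := IsLocalization.exists_integer_multiple (nonZeroDivisors R) (f x)
    refine ⟨(b : R), nonZeroDivisors.coe_ne_zero b, ?_⟩
    have hx : (b : R) • x = a • f.symm 1 := by
      apply f.injective
      rw [map_smul, map_smul, LinearEquiv.apply_symm_apply, ← ha,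
        Algebra.algebraMap_eq_smul_one]
    have : (b : R) • (x : M) = a • u := by
      have := congrArg (Subtype.val) hx
      simpa using this
    rw [this]
    exact Submodule.smul_mem _ _ (Submodule.mem_span_singleton_self u)
  -- Zorn: a maximal submodule disjoint from N
  obtain ⟨C, -, hCS, hCmax⟩ := zorn_le_nonempty₀ {C : Submodule R M | C ⊓ N = ⊥}
    (fun c hcs hchain y hy => by
      refine ⟨sSup c, ?_, fun z hz => le_sSup hz⟩
      rw [Set.mem_setOf_eq, eq_bot_iff]
      rintro z ⟨hz1, hz2⟩
      obtain ⟨C0, hC0c, hzC0⟩ := Submodule.mem_sSup_of_directed ⟨y, hy⟩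
        (hchain.directedOn) |>.mp hz1
      have : z ∈ C0 ⊓ N := ⟨hzC0, hz2⟩
      rw [hcs hC0c] at this
      exact this) ⊥ (by simp)
  refine ⟨K ⊔ C, ?_, ?_, ?_⟩
  · -- nonzero
    intro h
    exact hu0 (by
      have : u ∈ (⊥ : Submodule R M) := h ▸ le_sup_left (α := Submodule R M)
        (Submodule.mem_span_singleton_self u)
      simpa using this)
  · -- proper
    intro h
    have hNK : N = K := by
      have h1 : (K ⊔ C) ⊓ N = K ⊔ (C ⊓ N) := sup_inf_assoc_of_le _ hKN
      rw [h, top_inf_eq, hCS, sup_bot_eq] at h1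
      exact h1
    have hsurj : Function.Surjective (algebraMap R (FractionRing R)) := by
      intro y
      have hy : ((f.symm y : N) : M) ∈ K := hNK ▸ (f.symm y).2
      obtain ⟨r, hr⟩ := Submodule.mem_span_singleton.mp hy
      refine ⟨r, ?_⟩
      have : f.symm y = r • f.symm 1 := by
        apply Subtype.ext
        simpa using hr.symm
      have := congrArg f this
      simpa [Algebra.algebraMap_eq_smul_one] using this.symm
    exact hR (IsFractionRing.surjective_iff_isField.mp hsurj)
  · -- essential
    intro P hP
    -- first, (N ⊔ C) ⊓ P ≠ ⊥
    have hNCP : (N ⊔ C) ⊓ P ≠ ⊥ := by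
      intro hdis
      have hCP : (C ⊔ P) ⊓ N = ⊥ := by
        rw [eq_bot_iff]
        rintro x ⟨hx1, hx2⟩
        obtain ⟨c, hc, p, hp, rfl⟩ := Submodule.mem_sup.mp hx1
        have hpNC : p ∈ N ⊔ C := by
          have : p = (c + p) - c := by abel
          rw [this]
          exact Submodule.sub_mem _ (Submodule.mem_sup_left hx2)
            (Submodule.mem_sup_right hc)
        have : p ∈ (N ⊔ C) ⊓ P := ⟨hpNC, hp⟩
        rw [hdis] at this
        simp only [Submodule.mem_bot] at this
        subst this
        have : c ∈ C ⊓ N := ⟨hc, by simpa using hx2⟩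
        rw [hCS] at this
        simpa using this
      have hle : C ⊔ P ≤ C := hCmax hCP le_sup_left
      have hPC : P ≤ C := le_sup_right.trans hle
      apply hP
      rw [eq_bot_iff]
      intro x hx
      have : x ∈ (N ⊔ C) ⊓ P := ⟨Submodule.mem_sup_right (hPC hx), hx⟩
      rw [hdis] at this
      exact this
    obtain ⟨z, ⟨hzNC, hzP⟩, hz0⟩ := (Submodule.ne_bot_iff _).mp hNCP
    obtain ⟨n, hn, c, hc, rfl⟩ := Submodule.mem_sup.mp hzNC
    obtain ⟨b, hb0, hbK⟩ := key ⟨n, hn⟩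
    rw [Submodule.ne_bot_iff]
    refine ⟨b • (n + c), ⟨?_, Submodule.smul_mem _ _ hzP⟩, smul_ne_zero hb0 hz0⟩
    rw [smul_add]
    exact Submodule.add_mem _ (Submodule.mem_sup_left hbK)
      (Submodule.mem_sup_right (Submodule.smul_mem _ _ hc))
end

section
/- Let R be an integral domain, M a left R-module with a proper essential submodule E, and N a submodule of M with N ≠ E such that the quotient M/N is torsion-free. Then the submodule (E + N)/N of M/N intersects every nonzero submodule of M/N nontrivially. -/
/-- If `E` is a proper essential submodule of `M`, `N ≠ E` is a submodule with `M/N`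
torsion-free, then `(E + N)/N` intersects every nonzero submodule of `M/N` nontrivially. -/
theorem sup_quotient_essential {R M : Type*} [CommRing R] [IsDomain R] [AddCommGroup M]
    [Module R M] (E N : Submodule R M) (hE : IsProperEssential E) (hNE : N ≠ E)
    (htf : NoZeroSMulDivisors R (M ⧸ N)) :
    ∀ K : Submodule R (M ⧸ N), K ≠ ⊥ → ((E ⊔ N).map N.mkQ) ⊓ K ≠ ⊥ := by
  obtain ⟨hEbot, hEtop, hess⟩ := hE
  intro K hK
  obtain ⟨q, hqK, hq0⟩ := (Submodule.ne_bot_iff K).mp hK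
  obtain ⟨m, hm⟩ := N.mkQ_surjective q
  have hm0 : m ≠ 0 := by
    rintro rfl
    simp at hm
    exact hq0 hm.symm
  have hspan : Submodule.span R {m} ≠ ⊥ := by
    simpa [Submodule.span_singleton_eq_bot] using hm0
  obtain ⟨x, hx, hx0⟩ := (Submodule.ne_bot_iff _).mp (hess _ hspan)
  obtain ⟨hxE, hxs⟩ := hx
  obtain ⟨r, rfl⟩ := Submodule.mem_span_singleton.mp hxs
  have hr0 : r ≠ 0 := by
    rintro rfl
    simp at hx0
  rw [Submodule.ne_bot_iff]
  refine ⟨N.mkQ (r • m), ⟨⟨r • m, le_sup_left (a := E) hxE, rfl⟩, ?_⟩, ?_⟩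
  · rw [map_smul, hm]
    exact K.smul_mem r hqK
  · rw [map_smul, hm]
    exact smul_ne_zero hr0 hq0
end

section
/- Let p be a prime and n > 1 a natural number, and let M = ⨁_{ℕ} ℤ_{p^n} be the countable direct sum of copies of ℤ/p^nℤ, as a module over the ring ℤ/p^nℤ. Then M is an SM module (every nonzero submodule contains a simple submodule), but M does not have finite length and M is not Artinian. -/
/-- An SM module: every nonzero submodule contains a simple submodule. -/
def IsSMModule (R M : Type*) [Ring R] [AddCommGroup M] [Module R M] : Prop :=
  ∀ N : Submodule R M, N ≠ ⊥ → ∃ S : Submodule R M, S ≤ N ∧ IsSimpleModule R ↥S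

open DirectSum

/-- For a prime `p` and `n > 1`, the countable direct sum `⨁_ℕ ℤ/pⁿℤ`, as a module over
`ℤ/pⁿℤ`, is an SM module which has neither finite length nor is Artinian. -/
theorem directSum_zmod_SM_not_finiteLength_not_artinian (p : ℕ) (hp : p.Prime) (n : ℕ)
    (hn : 1 < n) :
    IsSMModule (ZMod (p ^ n)) (⨁ _ : ℕ, ZMod (p ^ n)) ∧
      ¬ IsFiniteLength (ZMod (p ^ n)) (⨁ _ : ℕ, ZMod (p ^ n)) ∧
      ¬ IsArtinian (ZMod (p ^ n)) (⨁ _ : ℕ, ZMod (p ^ n)) := by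
  haveI : NeZero (p ^ n) := ⟨pow_ne_zero n hp.ne_zero⟩
  haveI : Fact (1 < p ^ n) := ⟨Nat.one_lt_pow (by omega) hp.one_lt⟩
  set R := ZMod (p ^ n)
  set M := ⨁ _ : ℕ, ZMod (p ^ n) with hM
  -- not Artinian
  have hnotArt : ¬ IsArtinian R M := by
    intro hArt
    set β : ℕ → Type := fun _ => ZMod (p ^ n)
    let N : ℕ → Submodule R M := fun k =>
      ⨅ i ∈ Finset.range k, LinearMap.ker (DirectSum.component R ℕ β i)
    have hmemN : ∀ k (x : M), x ∈ N k ↔ ∀ i ∈ Finset.range k, x i = 0 := by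
      intro k x
      simp [N, Submodule.mem_iInf, DirectSum.component, DFinsupp.lapply]
    have hmono : ∀ k m, k ≤ m → N m ≤ N k := fun k m h =>
      biInf_mono (fun i hi => Finset.mem_range.mpr (lt_of_lt_of_le (Finset.mem_range.mp hi) h))
    let f : ℕ →o (Submodule R M)ᵒᵈ := ⟨N, fun k m h => hmono k m h⟩
    obtain ⟨k, hk⟩ := monotone_stabilizes_iff_artinian.mpr hArt f
    have hEq : N k = N (k + 1) := hk (k + 1) (Nat.le_succ k)
    have he : DirectSum.lof R ℕ β k 1 ∈ N k := by
      rw [hmemN]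
      intro i hi
      have hik : i ≠ k := Nat.ne_of_lt (Finset.mem_range.mp hi)
      have := DirectSum.component.of (R := R) (M := β) i k (1 : β k)
      rw [dif_neg (fun h => hik h.symm)] at this
      simpa [DirectSum.component, DFinsupp.lapply] using this
    have hne : DirectSum.lof R ℕ β k 1 ∉ N (k + 1) := by
      rw [hmemN]
      intro h
      have := h k (Finset.mem_range.mpr (Nat.lt_succ_self k))
      rw [DirectSum.lof_apply] at this
      exact one_ne_zero this
    exact hne (hEq ▸ he)
  refine ⟨?_, ?_, hnotArt⟩
  · -- SM module
    intro N hN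
    obtain ⟨x, hxN, hx0⟩ := Submodule.ne_bot_iff N |>.mp hN
    let C : Submodule R M := Submodule.span R {x}
    have hCN : C ≤ N := Submodule.span_le.mpr (Set.singleton_subset_iff.mpr hxN)
    haveI : Module.Finite R C := Module.Finite.span_singleton R x
    haveI : Finite C := Module.finite_of_finite R
    haveI : IsArtinian R C := isArtinian_of_finite
    haveI : Nontrivial C := Submodule.nontrivial_iff_ne_bot.mpr
      (fun h => hx0 (by have := Submodule.mem_span_singleton_self (R := R) x; rw [show Submodule.span R {x} = C from rfl, h, Submodule.mem_bot] at this; exact this))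
    haveI : Nontrivial (Submodule R C) := ⟨⊥, ⊤, bot_ne_top⟩
    obtain ⟨a, ha⟩ := IsAtomic.exists_atom (Submodule R C)
    refine ⟨a.map C.subtype, le_trans (Submodule.map_subtype_le C a) hCN, ?_⟩
    haveI : IsSimpleModule R a := isSimpleModule_iff_isAtom.mpr ha
    exact IsSimpleModule.congr
      (Submodule.equivMapOfInjective C.subtype C.injective_subtype a).symm
  · -- not finite length
    intro hFL
    exact hnotArt ((isFiniteLength_iff_isNoetherian_isArtinian.mp hFL).2)
end

section
/- Let M be a torsion-free left module over an integral domain R. For every submodule N of M, the closure of the localization equals the localization of the closure: Cl_{D⁻¹M}(D⁻¹N) = D⁻¹(Cl_M(N)), where D = R \ {0}; consequently, for any family {N_α}_{α ∈ Λ} of submodules of M whose images form an (internal) direct sum in D⁻¹M, one has Cl_{D⁻¹M}(⨁_{α ∈ Λ} N_α) = ⨁_{α ∈ Λ} Cl_{D⁻¹M}(N_α) and Cl_M(⨁_{α ∈ Λ} N_α) = M ∩ D⁻¹(⨁_{α ∈ Λ} Cl_M(N_α)). -/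
/-!
If `f m = n / s` in `D⁻¹M` with `n ∈ N`, then `(c * s) • m = c • n ∈ N` for some `c ∈ D`; hence
`M ∩ D⁻¹N = Cl_M(N)`, and together with `Cl` being a closure operator this gives the first and
the last identity. In `D⁻¹M` every nonzero `r` acts invertibly, so a relation `r • z ∈ ⨆ α, W α`
can be divided by `r` summand by summand: there `Cl` commutes with arbitrary sums.
-/

open nonZeroDivisors

def Submodule.closureOfNonzero {R M : Type*} [CommRing R] [IsDomain R] [AddCommGroup M] [Module R M]
    (N : Submodule R M) : Submodule R M where
  carrier := {m : M | ∃ r : R, r ≠ 0 ∧ r • m ∈ N}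
  zero_mem' := ⟨1, one_ne_zero, by simp⟩
  add_mem' := by
    rintro a b ⟨r, hr, hra⟩ ⟨s, hs, hsb⟩
    refine ⟨r * s, mul_ne_zero hr hs, ?_⟩
    rw [smul_add]
    exact N.add_mem (by rw [mul_comm, mul_smul]; exact N.smul_mem s hra)
      (by rw [mul_smul]; exact N.smul_mem r hsb)
  smul_mem' := by
    rintro c a ⟨r, hr, hra⟩
    exact ⟨r, hr, by rw [smul_comm]; exact N.smul_mem c hra⟩

namespace Submodule

variable {R : Type*} [CommRing R] [IsDomain R]

section Closure

variable {M : Type*} [AddCommGroup M] [Module R M]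

theorem le_closureOfNonzero (N : Submodule R M) : N ≤ N.closureOfNonzero :=
  fun m hm => ⟨1, one_ne_zero, by rwa [one_smul]⟩

theorem closureOfNonzero_le_closureOfNonzero {N P : Submodule R M}
    (h : N ≤ P.closureOfNonzero) : N.closureOfNonzero ≤ P.closureOfNonzero := by
  rintro m ⟨r, hr, hrm⟩
  obtain ⟨s, hs, hsrm⟩ := h hrm
  exact ⟨s * r, mul_ne_zero hs hr, by rwa [mul_smul]⟩

variable (R M) in
def closureOfNonzeroOperator : ClosureOperator (Submodule R M) :=
  .mk₂ closureOfNonzero le_closureOfNonzero fun _ _ => closureOfNonzero_le_closureOfNonzero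

theorem closureOfNonzero_iSup_of_isUnit
    (hM : ∀ r : R, r ≠ 0 → IsUnit (algebraMap R (Module.End R M) r))
    {ι : Type*} (W : ι → Submodule R M) :
    (⨆ α, W α).closureOfNonzero = ⨆ α, (W α).closureOfNonzero := by
  refine le_antisymm ?_ (iSup_le fun α => closureOfNonzero_le_closureOfNonzero
    ((le_iSup W α).trans (le_closureOfNonzero _)))
  rintro z ⟨r, hr, hrz⟩
  set e : Module.End R M := ↑(hM r hr).unit⁻¹
  have he_left (y : M) : e (r • y) = y :=
    LinearMap.congr_fun (hM r hr).val_inv_mul y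
  have he_right (y : M) : r • e y = y :=
    LinearMap.congr_fun (hM r hr).mul_val_inv y
  have hmap (α : ι) : (W α).map e ≤ (W α).closureOfNonzero := by
    rintro _ ⟨w, hw, rfl⟩
    exact ⟨r, hr, by rwa [he_right]⟩
  have hz : z ∈ (⨆ α, W α).map e := he_left z ▸ mem_map_of_mem hrz
  rw [map_iSup] at hz
  exact iSup_mono hmap hz

end Closure

section Localization

variable {M M' : Type*} [AddCommGroup M] [Module R M] [AddCommGroup M'] [Module R M']
  (f : M →ₗ[R] M') [IsLocalizedModule R⁰ f]

theorem comap_localized₀_eq_closureOfNonzero (N : Submodule R M) :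
    (N.localized₀ R⁰ f).comap f = N.closureOfNonzero := by
  ext m
  constructor
  · rintro ⟨n, hn, s, hs⟩
    rw [IsLocalizedModule.mk'_eq_iff, ← LinearMap.map_smul_of_tower,
      IsLocalizedModule.eq_iff_exists R⁰ f] at hs
    obtain ⟨c, hc⟩ := hs
    refine ⟨c * s, mul_ne_zero (nonZeroDivisors.ne_zero c.2) (nonZeroDivisors.ne_zero s.2), ?_⟩
    rw [mul_smul, ← Submonoid.smul_def, ← Submonoid.smul_def, ← hc]
    exact N.smul_mem _ hn
  · rintro ⟨r, hr, hrm⟩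
    exact ⟨r • m, hrm, ⟨r, mem_nonZeroDivisors_of_ne_zero hr⟩,
      IsLocalizedModule.mk'_cancel f m _⟩

theorem closureOfNonzero_localized₀ (N : Submodule R M) :
    (N.localized₀ R⁰ f).closureOfNonzero = N.closureOfNonzero.localized₀ R⁰ f := by
  refine le_antisymm ?_ ?_
  · rintro z ⟨r, hr, hrz⟩
    obtain ⟨⟨m, s⟩, rfl⟩ := IsLocalizedModule.mk'_surjective R⁰ f z
    have hrm : r • m ∈ N.closureOfNonzero := by
      rw [← comap_localized₀_eq_closureOfNonzero f, mem_comap, LinearMap.map_smul,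
        ← IsLocalizedModule.mk'_cancel' f m s, smul_comm]
      exact smul_mem _ _ hrz
    exact ⟨m, closureOfNonzero_le_closureOfNonzero le_rfl ⟨r, hr, hrm⟩, s, rfl⟩
  · rintro _ ⟨m, ⟨r, hr, hrm⟩, s, rfl⟩
    exact ⟨r, hr, by rw [← IsLocalizedModule.mk'_smul]; exact ⟨r • m, hrm, s, rfl⟩⟩

end Localization

end Submodule

theorem closure_localized_eq_localized_closure_general {R : Type*} [CommRing R] [IsDomain R]
    {M : Type*} [AddCommGroup M] [Module R M] :
    (∀ N : Submodule R M,
      Submodule.closureOfNonzero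
          (N.localized₀ R⁰ (LocalizedModule.mkLinearMap R⁰ M)) =
        (Submodule.closureOfNonzero N).localized₀ R⁰ (LocalizedModule.mkLinearMap R⁰ M)) ∧
    ∀ {ι : Type*} (N : ι → Submodule R M),
      iSupIndep (fun α => (N α).map (LocalizedModule.mkLinearMap R⁰ M)) →
        Submodule.closureOfNonzero ((⨆ α, N α).map (LocalizedModule.mkLinearMap R⁰ M)) =
            ⨆ α, Submodule.closureOfNonzero ((N α).map (LocalizedModule.mkLinearMap R⁰ M)) ∧
          Submodule.closureOfNonzero (⨆ α, N α) =
            Submodule.comap (LocalizedModule.mkLinearMap R⁰ M)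
              ((⨆ α, Submodule.closureOfNonzero (N α)).localized₀ R⁰
                (LocalizedModule.mkLinearMap R⁰ M)) := by
  set f := LocalizedModule.mkLinearMap R⁰ M
  have hf_units (r : R) (hr : r ≠ 0) :
      IsUnit (algebraMap R (Module.End R (LocalizedModule R⁰ M)) r) :=
    IsLocalizedModule.map_units f ⟨r, mem_nonZeroDivisors_of_ne_zero hr⟩
  refine ⟨Submodule.closureOfNonzero_localized₀ f, fun N _ => ⟨?_, ?_⟩⟩
  · rw [Submodule.map_iSup, Submodule.closureOfNonzero_iSup_of_isUnit hf_units]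
  · rw [Submodule.comap_localized₀_eq_closureOfNonzero]
    exact ((Submodule.closureOfNonzeroOperator R M).closure_iSup_closure N).symm

/-- For a torsion-free module `M` over an integral domain `R` with `D = R \ {0}`:
the closure of the localization of a submodule equals the localization of the closure,
and consequently the closure (in `D⁻¹M`, resp. in `M`) commutes with (internal) direct
sums of submodules. -/
theorem closure_localized_eq_localized_closure {R : Type*} [CommRing R] [IsDomain R]
    {M : Type*} [AddCommGroup M] [Module R M] [NoZeroSMulDivisors R M] :
    (∀ N : Submodule R M,
      Submodule.closureOfNonzero
          (N.localized₀ R⁰ (LocalizedModule.mkLinearMap R⁰ M)) =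
        (Submodule.closureOfNonzero N).localized₀ R⁰ (LocalizedModule.mkLinearMap R⁰ M)) ∧
    ∀ {ι : Type*} (N : ι → Submodule R M),
      iSupIndep (fun α => (N α).map (LocalizedModule.mkLinearMap R⁰ M)) →
        Submodule.closureOfNonzero ((⨆ α, N α).map (LocalizedModule.mkLinearMap R⁰ M)) =
            ⨆ α, Submodule.closureOfNonzero ((N α).map (LocalizedModule.mkLinearMap R⁰ M)) ∧
          Submodule.closureOfNonzero (⨆ α, N α) =
            Submodule.comap (LocalizedModule.mkLinearMap R⁰ M)
              ((⨆ α, Submodule.closureOfNonzero (N α)).localized₀ R⁰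
                (LocalizedModule.mkLinearMap R⁰ M)) :=
  closure_localized_eq_localized_closure_general
end
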